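/- If 0 → F → E → G → 0 is a short exact sequence of Banach spaces where both F and E are ℵ-injective, then the quotient G is ℵ-injective. -/

import Mathlib

/-!
Lift `t : Y → G` through `π` to some `w : Y → E`; then an extension `W` of `w` given by the
`ℵ`-injectivity of `E` yields the extension `π ∘ W` of `t`.

To lift `t`, choose a closed subspace `E₀ ⊆ E` of density `< ℵ` with `t(Y) ⊆ π(E₀)`: lift a
`ℚ`-subspace of cardinality `< ℵ` whose closure contains `t(Y)` with norm control, then pass to
the closure by the controlled-closure argument. The pullback `P = {(y, e) ∈ Y × E₀ | t y = π e}`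
has density `< ℵ`, and on the kernel of `ρ : P → Y` the second coordinate lies in
`ker π = j(F)`. Extending `j⁻¹ ∘ snd` from `ker ρ` to `Φ : P → F` by the `ℵ`-injectivity of `F`,
the map `snd - j ∘ Φ` vanishes on `ker ρ`, so it factors through the open surjection `ρ` as the
required lift.
-/

open Cardinal

/-- The density character of a topological space: the least cardinality of a dense subset. -/
noncomputable def dens (X : Type) [TopologicalSpace X] : Cardinal :=
  sInf {c | ∃ s : Set X, Dense s ∧ #s = c}

/-- A Banach space `E` is `ℵ`-injective if for every Banach space `X` of density character
less than `ℵ` and every closed subspace `Y ⊆ X`, every bounded operator `t : Y → E`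
extends to a bounded operator `T : X → E`. -/
def AlephInjective (E : Type) [NormedAddCommGroup E] [NormedSpace ℝ E] [CompleteSpace E]
    (ℵ : Cardinal) : Prop :=
  ∀ (X : Type) [NormedAddCommGroup X] [NormedSpace ℝ X] [CompleteSpace X],
    dens X < ℵ → ∀ (Y : Submodule ℝ X), IsClosed (Y : Set X) →
    ∀ t : Y →L[ℝ] E, ∃ T : X →L[ℝ] E, ∀ y : Y, T y = t y

section DensityCharacter

variable {X Y : Type} [TopologicalSpace X] [TopologicalSpace Y]

lemma dens_le_mk {s : Set X} (hs : Dense s) : dens X ≤ #s :=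
  csInf_le' ⟨s, hs, rfl⟩

lemma exists_dense_mk_eq_dens (X : Type) [TopologicalSpace X] :
    ∃ s : Set X, Dense s ∧ #s = dens X :=
  csInf_mem (s := {c | ∃ s : Set X, Dense s ∧ #s = c}) ⟨_, Set.univ, dense_univ, rfl⟩

lemma dens_le_mk_of_subset_closure {s t : Set X} (hst : s ⊆ t) (hts : t ⊆ closure s) :
    dens t ≤ #s := by
  refine (dens_le_mk (s := Subtype.val ⁻¹' s) ?_).trans ?_
  · rw [Subtype.dense_iff, Subtype.image_preimage_coe, Set.inter_eq_right.mpr hst]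
    exact hts
  · exact Cardinal.mk_preimage_of_injective _ _ Subtype.val_injective

lemma dens_prod_le : dens (X × Y) ≤ dens X * dens Y := by
  obtain ⟨s, hs, hsX⟩ := exists_dense_mk_eq_dens X
  obtain ⟨t, ht, htY⟩ := exists_dense_mk_eq_dens Y
  rw [← hsX, ← htY]
  calc dens (X × Y) ≤ #(s ×ˢ t) := dens_le_mk (hs.prod ht)
    _ = #s * #t := by
      rw [Cardinal.mk_congr (Equiv.Set.prod s t), Cardinal.mk_prod, Cardinal.lift_id,
        Cardinal.lift_id]

end DensityCharacter

lemma dens_subtype_le {X : Type} [PseudoMetricSpace X] (s : Set X) : dens s ≤ dens X * ℵ₀ := by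
  obtain ⟨D, hD, hDX⟩ := exists_dense_mk_eq_dens X
  rcases s.eq_empty_or_nonempty with rfl | ⟨x₀, hx₀⟩
  · exact (dens_le_mk (X := (∅ : Set X)) (s := ∅) fun x => x.2.elim).trans (by simp)
  have hpick : ∀ p : D × ℕ, ∃ y : s,
      ∀ z : s, dist (z : X) p.1 < 1 / (p.2 + 1) → dist (y : X) p.1 < 1 / (p.2 + 1) := by
    intro p
    by_cases h : ∃ z : s, dist (z : X) p.1 < 1 / (p.2 + 1)
    · obtain ⟨z, hz⟩ := h
      exact ⟨z, fun _ _ => hz⟩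
    · exact ⟨⟨x₀, hx₀⟩, fun z hz => (h ⟨z, hz⟩).elim⟩
  choose c hc using hpick
  have hdense : Dense (Set.range c) := by
    refine Metric.dense_iff.mpr fun y r hr => ?_
    obtain ⟨n, hn⟩ := exists_nat_one_div_lt (half_pos hr)
    obtain ⟨d, hyd, hdD⟩ := Metric.dense_iff.mp hD (y : X) _ (Nat.one_div_pos_of_nat (n := n))
    rw [Metric.mem_ball, dist_comm] at hyd
    refine ⟨c (⟨d, hdD⟩, n), ?_, Set.mem_range_self _⟩
    rw [Metric.mem_ball, Subtype.dist_eq]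
    calc dist (c (⟨d, hdD⟩, n) : X) y ≤ dist (c (⟨d, hdD⟩, n) : X) d + dist d y :=
          dist_triangle _ _ _
      _ < 1 / (n + 1) + 1 / (n + 1) := by
          rw [dist_comm d]
          exact add_lt_add (hc _ y hyd) hyd
      _ < r := by linarith
  calc dens s ≤ #(Set.range c) := dens_le_mk hdense
    _ ≤ #(D × ℕ) := Cardinal.mk_range_le
    _ = dens X * ℵ₀ := by
      rw [Cardinal.mk_prod, Cardinal.lift_id, Cardinal.lift_id, Cardinal.mk_nat, hDX]

lemma dens_subtype_lt {X : Type} [PseudoMetricSpace X] {ℵ : Cardinal} (hℵ : ℵ₀ < ℵ)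
    (hX : dens X < ℵ) (s : Set X) : dens s < ℵ :=
  (dens_subtype_le s).trans_lt (Cardinal.mul_lt_of_lt hℵ.le hX hℵ)

lemma mk_span_rat_le {E : Type} [AddCommGroup E] [Module ℚ E] (s : Set E) :
    #(Submodule.span ℚ s) ≤ max #s ℵ₀ := by
  rcases isEmpty_or_nonempty s with hs | hs
  · rw [Set.isEmpty_coe_sort.mp hs, Submodule.span_empty]
    simp
  calc #(Submodule.span ℚ s) ≤ #(s →₀ ℚ) := Cardinal.mk_le_of_surjective
        (f := fun l => ⟨Finsupp.linearCombination ℚ (↑) l,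
          (Finsupp.mem_span_iff_linearCombination ℚ s _).mpr ⟨l, rfl⟩⟩)
        fun x => by
          simpa [Subtype.ext_iff] using (Finsupp.mem_span_iff_linearCombination ℚ s x).mp x.2
    _ = max #s ℵ₀ := by rw [Cardinal.mk_finsupp_of_infinite', Cardinal.mkRat]

lemma span_real_subset_closure_span_rat {E : Type} [AddCommGroup E] [Module ℝ E] [Module ℚ E]
    [TopologicalSpace E] [IsTopologicalAddGroup E] [ContinuousSMul ℝ E] (s : Set E) :
    (Submodule.span ℝ s : Set E) ⊆ closure (Submodule.span ℚ s) := by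
  -- the closure is stable under rational, hence by density under real, scalars
  let C : Submodule ℝ E :=
    { (Submodule.span ℚ s).toAddSubgroup.topologicalClosure with
      smul_mem' := fun r x hx => by
        have hrat : ∀ q : ℚ, (q : ℝ) • x ∈ closure (Submodule.span ℚ s : Set E) := fun q =>
          Set.MapsTo.closure (f := ((q : ℝ) • ·))
            (fun y hy => by
              simpa [Rat.cast_smul_eq_qsmul] using (Submodule.span ℚ s).smul_mem q hy)
            (continuous_const_smul _) hx
        exact Rat.denseRange_cast.induction_on r
          (isClosed_closure.preimage (continuous_id.smul continuous_const)) hrat }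
  exact Submodule.span_le (p := C) |>.mpr fun x hx => subset_closure (Submodule.subset_span hx)

lemma dens_topologicalClosure_span_le {E : Type} [NormedAddCommGroup E] [NormedSpace ℝ E]
    (s : Set E) : dens (Submodule.span ℝ s).topologicalClosure ≤ max #s ℵ₀ := by
  let _ : Module ℚ E := Module.compHom E (algebraMap ℚ ℝ)
  refine (dens_le_mk_of_subset_closure (s := Submodule.span ℚ s) ?_ ?_).trans (mk_span_rat_le s)
  · exact fun x hx => Submodule.le_topologicalClosure _
      (Submodule.span_le_restrictScalars ℚ ℝ s hx)
  · rw [Submodule.topologicalClosure_coe]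
    exact closure_minimal (span_real_subset_closure_span_rat s) isClosed_closure

lemma exists_isClosed_dens_lt_closure_subset_image {E G : Type}
    [NormedAddCommGroup E] [NormedSpace ℝ E] [CompleteSpace E]
    [NormedAddCommGroup G] [NormedSpace ℝ G] [CompleteSpace G]
    {ℵ : Cardinal} (hℵ : ℵ₀ < ℵ) (π : E →L[ℝ] G) (hπ : Function.Surjective π)
    (S : Set G) (hS : #S < ℵ) :
    ∃ E₀ : Submodule ℝ E, IsClosed (E₀ : Set E) ∧ dens E₀ < ℵ ∧ closure S ⊆ π '' E₀ := by
  let _ : Module ℚ G := Module.compHom G (algebraMap ℚ ℝ)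
  obtain ⟨C, hC, hlift⟩ := π.exists_preimage_norm_le hπ
  choose e he hne using hlift
  let K := (Submodule.span ℚ S).toAddSubgroup
  have hK : #K < ℵ := (mk_span_rat_le S).trans_lt (max_lt hS hℵ)
  let E₀ := (Submodule.span ℝ (e '' K)).topologicalClosure
  have hE₀ : IsClosed (E₀ : Set E) := Submodule.isClosed_topologicalClosure _
  have : CompleteSpace E₀ := hE₀.completeSpace_coe
  refine ⟨E₀, hE₀, (dens_topologicalClosure_span_le _).trans_lt
    (max_lt (Cardinal.mk_image_le.trans_lt hK) hℵ), fun g hg => ?_⟩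
  let f : E₀ →L[ℝ] G := π ∘L E₀.subtypeL
  have hsurj : (f : E₀ →+ G).mkNormedAddGroupHom ‖f‖ f.le_opNorm |>.SurjectiveOnWith K C :=
    fun h hh => ⟨⟨e h, Submodule.le_topologicalClosure _ (Submodule.subset_span ⟨h, hh, rfl⟩)⟩,
      he h, hne h⟩
  obtain ⟨x, hx, -⟩ := controlled_closure_of_complete hC one_pos hsurj g
    (closure_mono (Submodule.subset_span (R := ℚ)) hg)
  exact ⟨x, x.2, hx⟩

lemma ContinuousLinearMap.exists_comp_eq_of_surjective {P Y E : Type}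
    [NormedAddCommGroup P] [NormedSpace ℝ P] [CompleteSpace P]
    [NormedAddCommGroup Y] [NormedSpace ℝ Y] [CompleteSpace Y]
    [NormedAddCommGroup E] [NormedSpace ℝ E]
    (ρ : P →L[ℝ] Y) (hρ : Function.Surjective ρ) (v : P →L[ℝ] E)
    (hker : LinearMap.ker (ρ : P →ₗ[ℝ] Y) ≤ LinearMap.ker (v : P →ₗ[ℝ] E)) :
    ∃ w : Y →L[ℝ] E, w ∘L ρ = v := by
  let w : Y →ₗ[ℝ] E := (LinearMap.ker (ρ : P →ₗ[ℝ] Y)).liftQ v hker ∘ₗ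
    ((ρ : P →ₗ[ℝ] Y).quotKerEquivOfSurjective hρ).symm.toLinearMap
  have hw : ∀ p, w (ρ p) = v p := fun p => by
    rw [← ρ.coe_coe, LinearMap.comp_apply, LinearEquiv.coe_coe,
      LinearMap.quotKerEquivOfSurjective_symm_apply, Submodule.liftQ_apply, v.coe_coe]
  have hcont : Continuous w :=
    ((ρ.isOpenMap hρ).isQuotientMap ρ.continuous hρ).continuous_iff.mpr <| by
      convert v.continuous using 1
      exact funext hw
  exact ⟨⟨w, hcont⟩, ContinuousLinearMap.ext hw⟩

lemma exists_lift_of_subset_image {F E G Y : Type}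
    [NormedAddCommGroup F] [NormedSpace ℝ F] [CompleteSpace F]
    [NormedAddCommGroup E] [NormedSpace ℝ E] [CompleteSpace E]
    [NormedAddCommGroup G] [NormedSpace ℝ G] [NormedAddCommGroup Y] [NormedSpace ℝ Y] [CompleteSpace Y]
    {ℵ : Cardinal} (hℵ : ℵ₀ < ℵ) {j : F →L[ℝ] E} {π : E →L[ℝ] G} (hj : Function.Injective j)
    (hexact : LinearMap.range (j : F →ₗ[ℝ] E) = LinearMap.ker (π : E →ₗ[ℝ] G))
    (hF : AlephInjective F ℵ) (hY : dens Y < ℵ) (t : Y →L[ℝ] G)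
    {E₀ : Submodule ℝ E} (hE₀c : IsClosed (E₀ : Set E)) (hE₀ : dens E₀ < ℵ)
    (hcover : ∀ y, t y ∈ π '' E₀) : ∃ w : Y →L[ℝ] E, π ∘L w = t := by
  have : CompleteSpace E₀ := hE₀c.completeSpace_coe
  let δ : Y × E₀ →L[ℝ] G := t ∘L .fst ℝ Y E₀ - π ∘L E₀.subtypeL ∘L .snd ℝ Y E₀
  let P := LinearMap.ker (δ : Y × E₀ →ₗ[ℝ] G)
  have hPc : IsClosed (P : Set (Y × E₀)) := δ.isClosed_ker
  have : CompleteSpace P := hPc.completeSpace_coe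
  have hP : dens P < ℵ := dens_subtype_lt hℵ
    (dens_prod_le.trans_lt (Cardinal.mul_lt_of_lt hℵ.le hY hE₀)) (P : Set (Y × E₀))
  have hPmem : ∀ p : P, π (p.1.2 : E) = t p.1.1 := fun p =>
    (sub_eq_zero.mp (LinearMap.mem_ker.mp p.2)).symm
  let ρ : P →L[ℝ] Y := .fst ℝ Y E₀ ∘L P.subtypeL
  have hρ : Function.Surjective ρ := fun y => by
    obtain ⟨e, he, hey⟩ := hcover y
    exact ⟨⟨(y, ⟨e, he⟩), by simp [P, δ, hey]⟩, rfl⟩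
  let N := LinearMap.ker (ρ : P →ₗ[ℝ] Y)
  have hN : ∀ p : N, (p.1.1.2 : E) ∈ LinearMap.range (j : F →ₗ[ℝ] E) := fun p => by
    rw [hexact, LinearMap.mem_ker, ContinuousLinearMap.coe_coe, hPmem,
      show p.1.1.1 = 0 from LinearMap.mem_ker.mp p.2, map_zero]
  have hjc : IsClosed (Set.range j) := by
    rw [← j.coe_coe, ← LinearMap.coe_range, hexact]
    exact π.isClosed_ker
  let φ : N →L[ℝ] F := (j.equivRange hj hjc).symm ∘L
    (E₀.subtypeL ∘L .snd ℝ Y E₀ ∘L P.subtypeL ∘L N.subtypeL).codRestrict _ hN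
  obtain ⟨Φ, hΦ⟩ := hF P hP N ρ.isClosed_ker φ
  have hjΦ : ∀ p : N, j (Φ p) = p.1.1.2 := fun p => by
    rw [hΦ]
    exact congrArg Subtype.val ((j.equivRange hj hjc).apply_symm_apply _)
  let v : P →L[ℝ] E := E₀.subtypeL ∘L .snd ℝ Y E₀ ∘L P.subtypeL - j ∘L Φ
  obtain ⟨w, hw⟩ := ρ.exists_comp_eq_of_surjective hρ v fun p hp => by
    simp [v, hjΦ ⟨p, hp⟩]
  have hπj : ∀ x, π (j x) = 0 := fun x =>
    LinearMap.mem_ker.mp (hexact ▸ LinearMap.mem_range_self (j : F →ₗ[ℝ] E) x)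
  refine ⟨w, ContinuousLinearMap.ext fun y => ?_⟩
  obtain ⟨p, rfl⟩ := hρ y
  calc π (w (ρ p)) = π (v p) := by rw [← hw]; rfl
    _ = t (ρ p) := by simp [v, hπj, hPmem, ρ]

lemma exists_lift_of_alephInjective {F E G Y : Type}
    [NormedAddCommGroup F] [NormedSpace ℝ F] [CompleteSpace F]
    [NormedAddCommGroup E] [NormedSpace ℝ E] [CompleteSpace E]
    [NormedAddCommGroup G] [NormedSpace ℝ G] [CompleteSpace G]
    [NormedAddCommGroup Y] [NormedSpace ℝ Y] [CompleteSpace Y]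
    {ℵ : Cardinal} (hℵ : ℵ₀ < ℵ) {j : F →L[ℝ] E} {π : E →L[ℝ] G} (hj : Function.Injective j)
    (hπ : Function.Surjective π)
    (hexact : LinearMap.range (j : F →ₗ[ℝ] E) = LinearMap.ker (π : E →ₗ[ℝ] G))
    (hF : AlephInjective F ℵ) (hY : dens Y < ℵ) (t : Y →L[ℝ] G) :
    ∃ w : Y →L[ℝ] E, π ∘L w = t := by
  obtain ⟨D, hD, hDY⟩ := exists_dense_mk_eq_dens Y
  obtain ⟨E₀, hE₀c, hE₀, hcover⟩ := exists_isClosed_dens_lt_closure_subset_image hℵ π hπ (t '' D)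
    (Cardinal.mk_image_le.trans_lt (hDY ▸ hY))
  exact exists_lift_of_subset_image hℵ hj hexact hF hY t hE₀c hE₀ fun y =>
    hcover (map_mem_closure t.continuous (hD y) fun d hd => ⟨d, hd, rfl⟩)

theorem stmt3
    (ℵ : Cardinal) (hℵ : Cardinal.aleph0 < ℵ)
    (F E G : Type)
    [NormedAddCommGroup F] [NormedSpace ℝ F] [CompleteSpace F]
    [NormedAddCommGroup E] [NormedSpace ℝ E] [CompleteSpace E]
    [NormedAddCommGroup G] [NormedSpace ℝ G] [CompleteSpace G]
    (j : F →L[ℝ] E) (π : E →L[ℝ] G)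
    (hj : ∃ c : ℝ, 0 < c ∧ ∀ x : F, c * ‖x‖ ≤ ‖j x‖)
    (hπ : Function.Surjective π)
    (hexact : LinearMap.range (j : F →ₗ[ℝ] E) = LinearMap.ker (π : E →ₗ[ℝ] G))
    (hF : AlephInjective F ℵ) (hE : AlephInjective E ℵ) :
    AlephInjective G ℵ := by
  intro X _ _ _ hX Y hYc t
  have : CompleteSpace Y := hYc.completeSpace_coe
  have hinj : Function.Injective j := by
    obtain ⟨c, hc, hjc⟩ := hj
    refine (injective_iff_map_eq_zero j).mpr fun x hx => norm_le_zero_iff.mp ?_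
    have hx' := hjc x
    rw [hx, norm_zero] at hx'
    exact nonpos_of_mul_nonpos_right hx' hc
  obtain ⟨w, hw⟩ := exists_lift_of_alephInjective hℵ hinj hπ hexact hF
    (dens_subtype_lt hℵ hX (Y : Set X)) t
  obtain ⟨W, hW⟩ := hE X hX Y hYc w
  exact ⟨π ∘L W, fun y => by rw [← hw, ContinuousLinearMap.comp_apply, hW]; rfl⟩
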